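/- Fix n ∈ ℕ and u ∈ ℝⁿ with u ≥ 0, and let F : [0,u] → ℝ be monotone and submodular. Let x, y ∈ [0,u] and o ∈ ℝⁿ with o ≥ 0 componentwise, Σ_{i=1}^n o_i > 0, x + o ∈ [0,u], and y ≤ x + o componentwise. Then there exists a coordinate i with o_i > 0 such that (F(x + o_i·e_i) − F(x))/o_i ≥ (F(y) − F(x))/(Σ_{j=1}^n o_j). -/

import Mathlib

/-! Split `x + o` into its one-coordinate increments `o i • e i`. Since these increments have
pairwise disjoint supports, adding them one at a time and applying submodularity at each step
shows that the total gain `F (x + o) - F x`, hence by monotonicity `F y - F x`, is at most the sum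
of the single-coordinate gains. One of these gains must then be at least its share
`o i / ∑ j, o j` of the total. -/

open Finset

def SubmodularOn {α : Type*} [Lattice α] (F : α → ℝ) (D : Set α) : Prop :=
  ∀ ⦃a⦄, a ∈ D → ∀ ⦃b⦄, b ∈ D → F (a ⊔ b) + F (a ⊓ b) ≤ F a + F b

section Piecewise

variable {ι β : Type*} [DecidableEq ι] [Lattice β] {f g : ι → β}

theorem Finset.piecewise_sup_piecewise (h : g ≤ f) (s t : Finset ι) :
    s.piecewise f g ⊔ t.piecewise f g = (s ∪ t).piecewise f g := by
  ext j
  by_cases hs : j ∈ s <;> by_cases ht : j ∈ t <;> simp [hs, ht, h j]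

theorem Finset.piecewise_inf_piecewise (h : g ≤ f) (s t : Finset ι) :
    s.piecewise f g ⊓ t.piecewise f g = (s ∩ t).piecewise f g := by
  ext j
  by_cases hs : j ∈ s <;> by_cases ht : j ∈ t <;> simp [hs, ht, h j]

theorem SubmodularOn.piecewise_sub_le_sum {F : (ι → β) → ℝ} (hF : SubmodularOn F (Set.Icc g f))
    (h : g ≤ f) (s : Finset ι) :
    F (s.piecewise f g) - F g ≤ ∑ i ∈ s, (F (({i} : Finset ι).piecewise f g) - F g) := by
  induction s using Finset.induction with
  | empty => simp
  | @insert a s ha ih =>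
    have hstep := hF (piecewise_mem_Icc' {a} h) (piecewise_mem_Icc' s h)
    rw [piecewise_sup_piecewise h, piecewise_inf_piecewise h, ← insert_eq,
      singleton_inter_of_notMem ha, piecewise_empty] at hstep
    rw [sum_insert ha]
    linarith

end Piecewise

theorem Finset.exists_le_div_of_le_sum {ι K : Type*} [Field K] [LinearOrder K]
    [IsStrictOrderedRing K] {s : Finset ι} {w a : ι → K} {A : K}
    (hw : ∀ i ∈ s, 0 ≤ w i) (hW : 0 < ∑ i ∈ s, w i) (ha : ∀ i ∈ s, w i = 0 → a i ≤ 0)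
    (hA : A ≤ ∑ i ∈ s, a i) :
    ∃ i ∈ s, 0 < w i ∧ A / ∑ j ∈ s, w j ≤ a i / w i := by
  set P := s.filter (fun i => 0 < w i)
  obtain ⟨i₀, hi₀, hwi₀⟩ := exists_lt_of_sum_lt (s := s) (f := fun _ => 0) (g := w)
    (by simpa using hW)
  have hP : P.Nonempty := ⟨i₀, mem_filter.2 ⟨hi₀, hwi₀⟩⟩
  have hshare : ∑ i ∈ P, (A / ∑ j ∈ s, w j) * w i ≤ ∑ i ∈ P, a i :=
    calc ∑ i ∈ P, (A / ∑ j ∈ s, w j) * w i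
        = ∑ i ∈ s, (A / ∑ j ∈ s, w j) * w i :=
          sum_filter_of_ne fun i hi hne =>
            (hw i hi).lt_of_ne fun h0 => hne (by rw [← h0, mul_zero])
      _ = A := by rw [← mul_sum, div_mul_cancel₀ _ hW.ne']
      _ ≤ ∑ i ∈ s, a i := hA
      _ ≤ ∑ i ∈ P, a i := by
          rw [← sum_filter_add_sum_filter_not s (fun i => 0 < w i)]
          have hrest : ∑ i ∈ s with ¬0 < w i, a i ≤ 0 := sum_nonpos fun i hi => by
            obtain ⟨his, hwi⟩ := mem_filter.1 hi
            exact ha i his (le_antisymm (not_lt.1 hwi) (hw i his))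
          linarith
  obtain ⟨i, hi, hle⟩ := exists_le_of_sum_le hP hshare
  obtain ⟨his, hwi⟩ := mem_filter.1 hi
  exact ⟨i, his, hwi, (le_div_iff₀ hwi).2 hle⟩

theorem Finset.piecewise_singleton_add_eq_add_single {ι M : Type*} [DecidableEq ι] [AddZeroClass M]
    (x o : ι → M) (i : ι) :
    ({i} : Finset ι).piecewise (x + o) x = x + Pi.single i (o i) := by
  ext j
  by_cases hj : j = i <;> simp [hj]

theorem stmt_5_general (n : ℕ) (u : Fin n → ℝ) (F : (Fin n → ℝ) → ℝ)
    (hmono : ∀ x y : Fin n → ℝ, 0 ≤ x → x ≤ u → 0 ≤ y → y ≤ u → x ≤ y → F x ≤ F y)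
    (hsub : ∀ x y : Fin n → ℝ, 0 ≤ x → x ≤ u → 0 ≤ y → y ≤ u →
      F (x ⊔ y) + F (x ⊓ y) ≤ F x + F y)
    (x y o : Fin n → ℝ) (hx0 : 0 ≤ x) (hy0 : 0 ≤ y) (hyu : y ≤ u)
    (ho : 0 ≤ o) (hosum : 0 < ∑ i : Fin n, o i)
    (hxo : x + o ≤ u) (hyxo : y ≤ x + o) :
    ∃ i : Fin n, 0 < o i ∧
      (F y - F x) / (∑ j : Fin n, o j) ≤ (F (x + Pi.single i (o i)) - F x) / o i := by
  have hle : x ≤ x + o := le_add_of_nonneg_right ho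
  have hF : SubmodularOn F (Set.Icc x (x + o)) := fun a ha b hb =>
    hsub a b (hx0.trans ha.1) (ha.2.trans hxo) (hx0.trans hb.1) (hb.2.trans hxo)
  have hgain : F y - F x ≤ ∑ i, (F (x + Pi.single i (o i)) - F x) := by
    have hsplit := hF.piecewise_sub_le_sum hle univ
    simp only [piecewise_univ, piecewise_singleton_add_eq_add_single] at hsplit
    linarith [hmono y (x + o) hy0 hyu (hx0.trans hle) hxo hyxo]
  obtain ⟨i, -, hoi, hi⟩ :=
    exists_le_div_of_le_sum (fun i _ => ho i) hosum (fun i _ h => by simp [h]) hgain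
  exact ⟨i, hoi, hi⟩

/-- the best coordinate-wise marginal density matches the average
density needed to reach the benchmark y. -/
theorem stmt_5 (n : ℕ) (u : Fin n → ℝ) (hu : 0 ≤ u) (F : (Fin n → ℝ) → ℝ)
    (hmono : ∀ x y : Fin n → ℝ, 0 ≤ x → x ≤ u → 0 ≤ y → y ≤ u → x ≤ y → F x ≤ F y)
    (hsub : ∀ x y : Fin n → ℝ, 0 ≤ x → x ≤ u → 0 ≤ y → y ≤ u →
      F (x ⊔ y) + F (x ⊓ y) ≤ F x + F y)
    (x y o : Fin n → ℝ) (hx0 : 0 ≤ x) (hxu : x ≤ u) (hy0 : 0 ≤ y) (hyu : y ≤ u)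
    (ho : 0 ≤ o) (hosum : 0 < ∑ i : Fin n, o i)
    (hxo : x + o ≤ u) (hyxo : y ≤ x + o) :
    ∃ i : Fin n, 0 < o i ∧
      (F y - F x) / (∑ j : Fin n, o j) ≤ (F (x + Pi.single i (o i)) - F x) / o i :=
  stmt_5_general n u F hmono hsub x y o hx0 hy0 hyu ho hosum hxo hyxo
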